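/- For all σ ∈ [0,1): ∫₀^π cos²(θ₀)·sin²(θ₀)/(1+σ²-2σcos(θ₀))² dθ₀ · (1-σ²) = (π/8)·(1+3σ²) ... i.e. ∫₀^π cos²(θ₀)sin²(θ₀)/(1+σ²-2σcos(θ₀))² dθ₀ = (π/8)·(1+3σ²)/(1-σ²). -/

import Mathlib

/-!
For `0 < σ < 1` the integrand has an explicit primitive, found by a partial-fraction
decomposition in `cos x` against the Poisson denominator `1 + σ² - 2σ cos x`. Besides rational
functions of `sin x` and `cos x` it contains `arctan (σ sin x / (1 - σ cos x))`, the argument of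
`1 - σ e^{ix}`, whose derivative is `σ (cos x - σ) / (1 + σ² - 2σ cos x)`. That term and all the
trigonometric ones vanish at `0` and `π`, so only the linear term `(1 + 3σ²) x / (8 (1 - σ²))`
contributes. For `σ = 0` the integral is the classical `∫₀^π cos² x sin² x dx = π / 8`.
-/

open Real

section PoissonDenominator

variable {σ x : ℝ}

lemma one_add_sq_sub_two_mul_mul_cos_eq :
    1 + σ ^ 2 - 2 * σ * cos x = (1 - σ * cos x) ^ 2 + (σ * sin x) ^ 2 := by
  linear_combination -σ ^ 2 * sin_sq_add_cos_sq x

lemma one_sub_mul_cos_pos (hσ : |σ| < 1) (x : ℝ) : 0 < 1 - σ * cos x := by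
  have : σ * cos x ≤ |σ| := by
    calc σ * cos x ≤ |σ * cos x| := le_abs_self _
      _ = |σ| * |cos x| := abs_mul _ _
      _ ≤ |σ| := mul_le_of_le_one_right (abs_nonneg σ) (abs_cos_le_one x)
  linarith

lemma one_add_sq_sub_two_mul_mul_cos_pos (hx : 1 - σ * cos x ≠ 0) :
    0 < 1 + σ ^ 2 - 2 * σ * cos x := by
  rw [one_add_sq_sub_two_mul_mul_cos_eq]
  positivity

lemma hasDerivAt_arctan_mul_sin_div_one_sub_mul_cos (hx : 1 - σ * cos x ≠ 0) :
    HasDerivAt (fun y => arctan (σ * sin y / (1 - σ * cos y)))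
      (σ * (cos x - σ) / (1 + σ ^ 2 - 2 * σ * cos x)) x := by
  have hq : HasDerivAt (fun y => σ * sin y / (1 - σ * cos y)) _ x :=
    ((hasDerivAt_sin x).const_mul σ).div (((hasDerivAt_cos x).const_mul σ).const_sub 1) hx
  convert hq.arctan using 1
  have hD := one_add_sq_sub_two_mul_mul_cos_pos hx
  rw [one_add_sq_sub_two_mul_mul_cos_eq] at hD ⊢
  field_simp
  linear_combination σ ^ 2 * sin_sq_add_cos_sq x

end PoissonDenominator

noncomputable def primitiveCosSqSinSqOverKernel (σ x : ℝ) : ℝ :=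
  (1 + 3 * σ ^ 2) / (8 * (1 - σ ^ 2)) * x
    + (1 + σ ^ 2) * (3 - 2 * σ ^ 2 + 3 * σ ^ 4) / (8 * σ ^ 4 * (1 - σ ^ 2)) *
        arctan (σ * sin x / (1 - σ * cos x))
    - (1 + σ ^ 2) ^ 2 / (8 * σ ^ 3) * (sin x / (1 + σ ^ 2 - 2 * σ * cos x))
    - (1 + σ ^ 2) / (4 * σ ^ 3) * sin x
    - 1 / (8 * σ ^ 2) * (sin x * cos x)

lemma hasDerivAt_primitiveCosSqSinSqOverKernel {σ x : ℝ} (hσ : σ ≠ 0) (hσ1 : 1 - σ ^ 2 ≠ 0)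
    (hx : 1 - σ * cos x ≠ 0) :
    HasDerivAt (primitiveCosSqSinSqOverKernel σ)
      (cos x ^ 2 * sin x ^ 2 / (1 + σ ^ 2 - 2 * σ * cos x) ^ 2) x := by
  have hD := one_add_sq_sub_two_mul_mul_cos_pos hx
  have hQ : HasDerivAt (fun y => sin y / (1 + σ ^ 2 - 2 * σ * cos y)) _ x :=
    (hasDerivAt_sin x).div (((hasDerivAt_cos x).const_mul (2 * σ)).const_sub (1 + σ ^ 2)) hD.ne'
  have H := (((((hasDerivAt_id x).const_mul ((1 + 3 * σ ^ 2) / (8 * (1 - σ ^ 2)))).add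
    ((hasDerivAt_arctan_mul_sin_div_one_sub_mul_cos hx).const_mul
      ((1 + σ ^ 2) * (3 - 2 * σ ^ 2 + 3 * σ ^ 4) / (8 * σ ^ 4 * (1 - σ ^ 2))))).sub
    (hQ.const_mul ((1 + σ ^ 2) ^ 2 / (8 * σ ^ 3)))).sub
    ((hasDerivAt_sin x).const_mul ((1 + σ ^ 2) / (4 * σ ^ 3)))).sub
    (((hasDerivAt_sin x).mul (hasDerivAt_cos x)).const_mul (1 / (8 * σ ^ 2)))
  refine H.congr_deriv ?_
  -- the form in which `field_simp` meets the denominator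
  have hD' : 1 + σ ^ 2 - σ * 2 * cos x ≠ 0 := by linarith
  field_simp
  rw [sin_sq x]
  ring

lemma primitiveCosSqSinSqOverKernel_pi_sub_zero (σ : ℝ) :
    primitiveCosSqSinSqOverKernel σ π - primitiveCosSqSinSqOverKernel σ 0 =
      π / 8 * ((1 + 3 * σ ^ 2) / (1 - σ ^ 2)) := by
  simp only [primitiveCosSqSinSqOverKernel, sin_pi, sin_zero, mul_zero, zero_div, arctan_zero]
  rw [div_mul_eq_div_div]
  ring

theorem integral_cos_sq_sin_sq_over_kernel (σ : ℝ) (hσ : σ ∈ Set.Ico (0:ℝ) 1) :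
    ∫ θ₀ in (0:ℝ)..π,
        Real.cos θ₀ ^ 2 * Real.sin θ₀ ^ 2 / (1 + σ ^ 2 - 2 * σ * Real.cos θ₀) ^ 2 =
      (π / 8) * ((1 + 3 * σ ^ 2) / (1 - σ ^ 2)) := by
  obtain ⟨hσ0, hσ1⟩ := hσ
  rcases hσ0.eq_or_lt with rfl | hσpos
  · have h4π : sin (4 * π) = 0 := by simpa using sin_nat_mul_pi 4
    calc _ = ∫ x in (0:ℝ)..π, sin x ^ 2 * cos x ^ 2 := by congr 1 with x; ring
      _ = _ := by rw [integral_sin_sq_mul_cos_sq, h4π, mul_zero, sin_zero]; ring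
  have hx (x : ℝ) : 1 - σ * cos x ≠ 0 :=
    (one_sub_mul_cos_pos (abs_lt.2 ⟨by linarith, hσ1⟩) x).ne'
  have hcont : Continuous fun x => cos x ^ 2 * sin x ^ 2 / (1 + σ ^ 2 - 2 * σ * cos x) ^ 2 :=
    .div (by fun_prop) (by fun_prop) fun x =>
      pow_ne_zero 2 (one_add_sq_sub_two_mul_mul_cos_pos (hx x)).ne'
  rw [intervalIntegral.integral_eq_sub_of_hasDerivAt
    (fun x _ => hasDerivAt_primitiveCosSqSinSqOverKernel hσpos.ne' (by nlinarith) (hx x))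
    (hcont.intervalIntegrable _ _)]
  exact primitiveCosSqSinSqOverKernel_pi_sub_zero σ
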